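/- arXiv:1605.03349 — 2 statements merged into one kernel-verified Lean document; each statement's English description precedes it below -/
import Mathlib

section
/- Let k be an even positive integer, let π ∈ B_{k/2} be a non-crossing pair-partition of {1,...,k}, and let (g_1,...,g_k) be a π-adopted sequence in a countable set G. If {m, m+l} ∈ π for some l > 1, then g_m = g_{m+l+1} and g_{m+1} = g_{m+l} (indices cyclic, k+1 := 1). -/
open MeasureTheory Filter Asymptotics ProbabilityTheory
open scoped Classical

/-- Cyclic addition on `Fin k` (indices of `{1,…,k}` understood cyclically). -/
def cycAdd {k : ℕ} (m : Fin k) (a : ℕ) : Fin k :=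
  ⟨(m.val + a) % k, Nat.mod_lt _ m.pos⟩

/-- Cyclic successor on `Fin k` (`k + 1 := 1`). -/
def cycSucc {k : ℕ} (m : Fin k) : Fin k := cycAdd m 1

/-- A pair-partition of `{1,…,k}`, encoded as a fixed-point free involution:
the blocks are the sets `{i, pair i}`. -/
structure PairPartition (k : ℕ) where
  pair : Fin k → Fin k
  involutive : ∀ i, pair (pair i) = i
  pair_ne : ∀ i, pair i ≠ i

namespace PairPartition

/-- A pair-partition is crossing if there are `a < b < c < d` such that
`{a,c}` and `{b,d}` are blocks. -/
def Crossing {k : ℕ} (π : PairPartition k) : Prop :=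
  ∃ a b c d : Fin k, a < b ∧ b < c ∧ c < d ∧ π.pair a = c ∧ π.pair b = d

/-- Non-crossing pair-partitions. -/
def NonCrossing {k : ℕ} (π : PairPartition k) : Prop := ¬ π.Crossing

noncomputable instance {k : ℕ} : Fintype (PairPartition k) :=
  Fintype.ofInjective PairPartition.pair (fun a b h => by
    cases a; cases b; simpa using h)

end PairPartition

/-- The increasing embedding `Fin (k-2) → Fin k` which misses the two positions
`m`, `m+1` (0-based). -/
def skip2 {k : ℕ} (m : ℕ) (j : Fin (k - 2)) : Fin k :=
  if j.val < m then ⟨j.val, by have := j.isLt; omega⟩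
  else ⟨j.val + 2, by have := j.isLt; omega⟩

/-- The embedding `Fin (k-2) → Fin k` which misses the two cyclic positions
`m+1`, `m+2` (0-based). -/
def seqSkip {k : ℕ} (m : ℕ) (j : Fin (k - 2)) : Fin k :=
  if m + 2 < k then
    (if j.val ≤ m then ⟨j.val, by have := j.isLt; omega⟩
     else ⟨j.val + 2, by have := j.isLt; omega⟩)
  else ⟨j.val + 1, by have := j.isLt; omega⟩

/-- `π ∖• {m, m+1}` (0-based: the block `{m, m+1}` is removed and indices `> m+1`
are relabelled by `a ↦ a - 2`), on the level of pairing functions. -/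
def delPairFun {k : ℕ} (p : Fin k → Fin k) (m : ℕ) : Fin (k - 2) → Fin (k - 2) :=
  fun j =>
    ⟨(if (p (skip2 m j)).val < m then (p (skip2 m j)).val
      else (p (skip2 m j)).val - 2) % (k - 2), Nat.mod_lt _ j.pos⟩

/-- `π`-adopted sequences (with `π` a pair-partition of `{1,…,k}` given by its pairing
function `p`), defined recursively:  for `k = 2` exactly the sequences `(g, h)` with
`g ≠ h` are adopted; for `k > 2` it is required that for every (0-based) block
`{m, m+1}` of `π` one has `g m = g (m+2)` (cyclically), `g s ≠ g (m+1)` for all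
`s ≠ m+1`, and that the sequence obtained by deleting the entries at the (cyclic)
positions `m+1`, `m+2` is `π ∖• {m, m+1}`-adopted. -/
inductive IsAdoptedFun {G : Type*} : {k : ℕ} → (Fin k → Fin k) → (Fin k → G) → Prop where
  | base (p : Fin 2 → Fin 2) (g : Fin 2 → G) (h : g 0 ≠ g 1) : IsAdoptedFun p g
  | step {k : ℕ} (hk : 4 ≤ k) (p : Fin k → Fin k) (g : Fin k → G)
      (h1 : ∀ (m : ℕ) (hm : m + 1 < k), (p ⟨m, by omega⟩).val = m + 1 →
        g ⟨m, by omega⟩ = g ⟨(m + 2) % k, Nat.mod_lt _ (by omega)⟩)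
      (h2 : ∀ (m : ℕ) (hm : m + 1 < k), (p ⟨m, by omega⟩).val = m + 1 →
        ∀ s : Fin k, s ≠ ⟨m + 1, hm⟩ → g s ≠ g ⟨m + 1, hm⟩)
      (h3 : ∀ (m : ℕ) (hm : m + 1 < k), (p ⟨m, by omega⟩).val = m + 1 →
        IsAdoptedFun (delPairFun p m) (fun j => g (seqSkip m j))) :
      IsAdoptedFun p g

/-- `π`-adopted sequences for a pair-partition `π`. -/
def PairPartition.IsAdopted {G : Type*} {k : ℕ} (π : PairPartition k) (g : Fin k → G) : Prop :=
  IsAdoptedFun π.pair g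

/-- The integral `∫_{[0,1]^n} ∏_{edges {a,b} of the graph traversed by `Gs`}
`α(|x_a - x_b|)²`, where the edges are `{Gs m, Gs (m+1)}` (cyclically). -/
noncomputable def JwithSeq (α : ℝ → ℝ) {k n : ℕ} (Gs : Fin k → Fin n) : ℝ :=
  ∫ x in (Set.univ.pi fun _ : Fin n => Set.Icc (0:ℝ) 1),
    ∏ e ∈ Finset.image (fun m : Fin k => s(Gs m, Gs (cycSucc m))) Finset.univ,
      Sym2.lift ⟨fun a b => α |x a - x b| ^ 2, fun a b => by simp only [abs_sub_comm (x a) (x b)]⟩ e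

/-- The `α²`-integral `J_α(π)` over the `π`-adopted graph (rooted tree) of a
non-crossing pair-partition `π` of `{1,…,k}` (given by its pairing function):
the adopted sequence has exactly `k/2 + 1` distinct nodes, so we realize it as a
surjection onto `Fin (k/2+1)`; the integral does not depend on this choice. -/
noncomputable def Jfun (α : ℝ → ℝ) {k : ℕ} (p : Fin k → Fin k) : ℝ :=
  if h : ∃ Gs : Fin k → Fin (k / 2 + 1), Function.Surjective Gs ∧ IsAdoptedFun p Gs then
    JwithSeq α h.choose
  else 0

/-- `P_N^{-1}(π)` for a pair-partition `π` (given by its pairing function `p`): the set of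
tuples `(i_1, …, i_k) ∈ {1,…,N}^k` such that `(i_l, i_{l+1}) ∼ (i_m, i_{m+1})` holds iff
`l` and `m` lie in the same block of `π` (indices cyclic). -/
def PinvPair {k N : ℕ} (E : Fin N × Fin N → Fin N × Fin N → Prop) (p : Fin k → Fin k) :
    Set (Fin k → Fin N) :=
  {i | ∀ l m : Fin k, E (i l, i (cycSucc l)) (i m, i (cycSucc m)) ↔ (l = m ∨ p l = m)}

/-- `P_N^{-1}(π)` for a general partition `π` of `{1,…,k}`. -/
def PinvPartition {k N : ℕ} (E : Fin N × Fin N → Fin N × Fin N → Prop)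
    (π : Finpartition (Finset.univ : Finset (Fin k))) : Set (Fin k → Fin N) :=
  {i | ∀ l m : Fin k, E (i l, i (cycSucc l)) (i m, i (cycSucc m)) ↔ ∃ b ∈ π.parts, l ∈ b ∧ m ∈ b}

/-- `Π_N^{-1}(π)`: the members of `P_N^{-1}(π)` which are not `π`-adopted sequences. -/
def PinvNA {k N : ℕ} (E : Fin N × Fin N → Fin N × Fin N → Prop) (p : Fin k → Fin k) :
    Set (Fin k → Fin N) :=
  {i | i ∈ PinvPair E p ∧ ¬ IsAdoptedFun p i}

/-- The quantity from condition (C1): `max_p #{(q,r,s) : (p,q) ∼ (r,s)}`. -/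
noncomputable def cond1Count {N : ℕ} (E : Fin N × Fin N → Fin N × Fin N → Prop) : ℕ :=
  Finset.univ.sup fun p : Fin N =>
    ({qrs : Fin N × Fin N × Fin N | E (p, qrs.1) (qrs.2.1, qrs.2.2)}).ncard

/-- The quantity from condition (C3): `#{(p,q,r) : (p,q) ∼ (q,r), r ≠ p}`. -/
noncomputable def cond3Count {N : ℕ} (E : Fin N × Fin N → Fin N × Fin N → Prop) : ℕ :=
  ({pqr : Fin N × Fin N × Fin N | E (pqr.1, pqr.2.1) (pqr.2.1, pqr.2.2) ∧ pqr.2.2 ≠ pqr.1}).ncard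

/-- Condition (C2): `#{s : (p,q) ∼ (r,s)} ≤ B` for all `p, q, r`. -/
def cond2 {N : ℕ} (E : Fin N × Fin N → Fin N × Fin N → Prop) (B : ℕ) : Prop :=
  ∀ p q r : Fin N, ({s : Fin N | E (p, q) (r, s)}).ncard ≤ B

/-- Independence of the sub-families of `(X_{pq})` indexed by the equivalence classes
of `∼`. -/
def IndepClasses {Ω : Type*} [MeasureSpace Ω] {N : ℕ}
    (E : Fin N × Fin N → Fin N × Fin N → Prop) (hE : Equivalence E)
    (X : Fin N → Fin N → Ω → ℝ) : Prop :=
  iIndepFun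
    (fun c : Quotient (Setoid.mk E hE) =>
      fun ω => fun p : {p : Fin N × Fin N // Quotient.mk (Setoid.mk E hE) p = c} =>
        X p.1.1 p.1.2 ω) volume

/-- The Catalan number `C_k = binom(2k, k)/(k+1)` as a real number. -/
noncomputable def catalanReal (j : ℕ) : ℝ := (Nat.choose (2 * j) j : ℝ) / (j + 1)

/-- The integral defining `J_α` over the graph traversed by `Gs`, in which the variable
attached to the node `g0` is fixed equal to `t` and only the remaining variables are
integrated over `[0,1]`. -/
noncomputable def JpartSeq (α : ℝ → ℝ) {k n : ℕ} (Gs : Fin k → Fin n) (g0 : Fin n) (t : ℝ) : ℝ :=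
  ∫ y in (Set.univ.pi fun _ : {i : Fin n // i ≠ g0} => Set.Icc (0:ℝ) 1),
    ∏ e ∈ Finset.image (fun m : Fin k => s(Gs m, Gs (cycSucc m))) Finset.univ,
      Sym2.lift ⟨fun a b =>
          α |(fun i : Fin n => if h : i = g0 then t else y ⟨i, h⟩) a -
             (fun i : Fin n => if h : i = g0 then t else y ⟨i, h⟩) b| ^ 2,
        fun a b => by
          simp only [abs_sub_comm ((fun i : Fin n => if h : i = g0 then t else y ⟨i, h⟩) a)
            ((fun i : Fin n => if h : i = g0 then t else y ⟨i, h⟩) b)]⟩ e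

/-!
Induction on `l`. For `l = 1` the claim is the defining property `g m = g (m+2)` of adopted
sequences. For `l ≥ 2`, non-crossing forces an adjacent block `{a, a+1}` strictly inside
`{m, m+l}`. Deleting it gives a sequence adopted for `π ∖• {a, a+1}`, in which `{m, m+l-2}`
is a block; since `g a = g (a+2)`, the deletion does not change the values at the four
positions involved, so the induction hypothesis transfers.
-/

lemma cycAdd_val {k : ℕ} (m : Fin k) (a : ℕ) : (cycAdd m a).val = (m.val + a) % k := rfl

lemma cycAdd_val_of_lt {k : ℕ} {m : Fin k} {a : ℕ} (h : m.val + a < k) :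
    (cycAdd m a).val = m.val + a :=
  Nat.mod_eq_of_lt h

lemma skip2_val {k : ℕ} (a : ℕ) (j : Fin (k - 2)) :
    (skip2 a j : Fin k).val = if j.val < a then j.val else j.val + 2 := by
  unfold skip2; split_ifs <;> rfl

lemma skip2_strictMono {k : ℕ} (a : ℕ) : StrictMono (skip2 (k := k) a) := by
  intro i j hij
  rw [Fin.lt_def, skip2_val, skip2_val]
  split_ifs <;> omega

lemma seqSkip_val_of_le {k a : ℕ} (ha : a + 2 < k) {j : Fin (k - 2)} (hj : j.val ≤ a) :
    (seqSkip a j : Fin k).val = j.val := by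
  simp [seqSkip, ha, hj]

lemma seqSkip_val_of_lt {k a : ℕ} (ha : a + 2 < k) {j : Fin (k - 2)} (hj : a < j.val) :
    (seqSkip a j : Fin k).val = j.val + 2 := by
  simp [seqSkip, ha, Nat.not_le.2 hj]

namespace PairPartition

variable {k : ℕ} {π : PairPartition k}

lemma pair_injective (π : PairPartition k) : Function.Injective π.pair :=
  Function.LeftInverse.injective π.involutive

lemma NonCrossing.pair_mem_Ioo (hnc : π.NonCrossing) {m a : Fin k} (hma : m < a)
    (haM : a < π.pair m) : π.pair a ∈ Set.Ioo m (π.pair m) := by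
  have hm : π.pair a ≠ m := fun h => by
    rw [← h, π.involutive] at haM
    exact lt_irrefl a haM
  have hM : π.pair a ≠ π.pair m := fun h => hma.ne' (π.pair_injective h)
  refine ⟨lt_of_le_of_ne (not_lt.1 fun h => hnc ?_) hm.symm,
    lt_of_le_of_ne (not_lt.1 fun h => hnc ?_) hM⟩
  · exact ⟨π.pair a, m, a, π.pair m, h, hma, haM, π.involutive a, rfl⟩
  · exact ⟨m, a, π.pair m, π.pair a, hma, haM, h, rfl, rfl⟩

lemma NonCrossing.exists_adjacent_block_between (hnc : π.NonCrossing) (m : Fin k)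
    (hm : m.val + 1 < (π.pair m).val) :
    ∃ a : Fin k, m < a ∧ a.val + 1 < (π.pair m).val ∧ (π.pair a).val = a.val + 1 := by
  induction h : (π.pair m).val - m.val using Nat.strong_induction_on generalizing m with
  | _ n ih =>
  obtain ⟨a, ha⟩ : ∃ a : Fin k, a.val = m.val + 1 := ⟨⟨m.val + 1, by omega⟩, rfl⟩
  have hma : m < a := by omega
  obtain ⟨hlo, hhi⟩ := hnc.pair_mem_Ioo hma (by omega)
  have hne : (π.pair a).val ≠ a.val := Fin.val_ne_of_ne (π.pair_ne a)
  rcases Nat.lt_or_ge (a.val + 1) (π.pair a).val with hab | hab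
  · obtain ⟨b, hab', hbM, hb⟩ := ih _ (by omega) a hab rfl
    exact ⟨b, hma.trans hab', by omega, hb⟩
  · exact ⟨a, hma, by omega, by omega⟩

lemma pair_val_ne_of_adjacent {a i : Fin k} (ha : (π.pair a).val = a.val + 1)
    (hia : i.val ≠ a.val) (hia' : i.val ≠ a.val + 1) :
    (π.pair i).val ≠ a.val ∧ (π.pair i).val ≠ a.val + 1 := by
  refine ⟨fun h => hia' ?_, fun h => hia (congrArg Fin.val (π.pair_injective (Fin.ext ?_)))⟩
  · rw [← ha, ← Fin.ext h, π.involutive]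
  · rw [h, ha]

lemma skip2_delPairFun {a : Fin k} (ha : (π.pair a).val = a.val + 1) (j : Fin (k - 2)) :
    skip2 a.val (delPairFun π.pair a.val j) = π.pair (skip2 a.val j) := by
  have hj := skip2_val (k := k) a.val j
  obtain ⟨h₁, h₂⟩ := pair_val_ne_of_adjacent ha (i := skip2 a.val j)
    (by split_ifs at hj <;> omega) (by split_ifs at hj <;> omega)
  have hlt := (π.pair (skip2 a.val j)).isLt
  have hval : (delPairFun π.pair a.val j).val = if (π.pair (skip2 a.val j)).val < a.val
      then (π.pair (skip2 a.val j)).val else (π.pair (skip2 a.val j)).val - 2 := by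
    simp only [delPairFun]
    split_ifs <;> exact Nat.mod_eq_of_lt (by omega)
  ext
  rw [skip2_val, hval]
  split_ifs <;> omega

def eraseAdjacent (π : PairPartition k) (a : Fin k) (ha : (π.pair a).val = a.val + 1) :
    PairPartition (k - 2) where
  pair := delPairFun π.pair a.val
  involutive i := (skip2_strictMono a.val).injective <| by
    rw [skip2_delPairFun ha, skip2_delPairFun ha, π.involutive]
  pair_ne i h := π.pair_ne (skip2 a.val i) <| by
    rw [← skip2_delPairFun ha, h]

lemma NonCrossing.eraseAdjacent (hnc : π.NonCrossing) (a : Fin k)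
    (ha : (π.pair a).val = a.val + 1) : (π.eraseAdjacent a ha).NonCrossing := by
  rintro ⟨b, c, d, e, hbc, hcd, hde, hbd, hce⟩
  have hmono := skip2_strictMono (k := k) a.val
  refine hnc ⟨_, _, _, _, hmono hbc, hmono hcd, hmono hde, ?_, ?_⟩
  · rw [← skip2_delPairFun ha]; exact congrArg _ hbd
  · rw [← skip2_delPairFun ha]; exact congrArg _ hce

lemma eraseAdjacent_pair_val {a m : Fin k} (ha : (π.pair a).val = a.val + 1) (hma : m < a)
    (haM : a.val + 1 < (π.pair m).val) (m' : Fin (k - 2)) (hm' : m'.val = m.val) :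
    ((π.eraseAdjacent a ha).pair m').val + 2 = (π.pair m).val := by
  have hskip : skip2 a.val m' = m := Fin.ext (by rw [skip2_val, if_pos (by omega), hm'])
  have h := congrArg Fin.val (skip2_delPairFun ha m')
  rw [hskip, skip2_val] at h
  change (delPairFun π.pair a.val m').val + 2 = _
  split_ifs at h <;> omega

end PairPartition

namespace IsAdoptedFun

variable {G : Type*} {k : ℕ} {p : Fin k → Fin k} {g : Fin k → G}

lemma apply_eq_apply_cycAdd_two (hg : IsAdoptedFun p g) {a : Fin k}
    (ha : (p a).val = a.val + 1) : g a = g (cycAdd a 2) := by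
  cases hg with
  | base _ g => exact congrArg g (Fin.ext (by rw [cycAdd_val]; omega))
  | step hk _ _ h1 => exact h1 a.val (by omega) ha

lemma delPairFun_seqSkip (hg : IsAdoptedFun p g) (hk : 2 < k) {a : Fin k}
    (ha : (p a).val = a.val + 1) :
    IsAdoptedFun (delPairFun p a.val) (fun j => g (seqSkip a.val j)) := by
  cases hg with
  | base => omega
  | step _ _ _ _ _ h3 => exact h3 a.val (by omega) ha

end IsAdoptedFun

section Endpoints

variable {G : Type*} {k : ℕ}

def EndpointsAgree (g : Fin k → G) (m : Fin k) (l : ℕ) (hml : m.val + l < k) : Prop :=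
  g m = g (cycAdd m (l + 1)) ∧ g (cycSucc m) = g ⟨m.val + l, hml⟩

/-- Deleting the positions `a+1, a+2` leaves the same values as deleting `a, a+1`
once `g a = g (a+2)`. -/
lemma apply_seqSkip_of_le (g : Fin k → G) {a : Fin k} (ha : a.val + 2 < k)
    (hg : g a = g (cycAdd a 2)) {j : Fin (k - 2)} (hj : a.val ≤ j.val) :
    g (seqSkip a.val j) = g ⟨j.val + 2, by omega⟩ := by
  rcases hj.eq_or_lt with h | h
  · rw [show seqSkip a.val j = a from Fin.ext (by rw [seqSkip_val_of_le ha h.ge, h]), hg]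
    exact congrArg g (Fin.ext (by rw [cycAdd_val_of_lt ha, h]))
  · exact congrArg g (Fin.ext (seqSkip_val_of_lt ha h))

lemma EndpointsAgree.of_seqSkip (g : Fin k → G) {a m : Fin k} {l : ℕ} (hma : m < a)
    (hal : a.val ≤ m.val + l) (hml : m.val + (l + 2) < k) (hg : g a = g (cycAdd a 2))
    (m' : Fin (k - 2)) (hm' : m'.val = m.val) (hml' : m'.val + l < k - 2)
    (h : EndpointsAgree (fun j => g (seqSkip a.val j)) m' l hml') :
    EndpointsAgree g m (l + 2) hml := by
  have ha : a.val + 2 < k := by omega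
  have e₁ : g (seqSkip a.val m') = g m :=
    congrArg g (Fin.ext ((seqSkip_val_of_le ha (by omega)).trans hm'))
  have e₂ : g (seqSkip a.val (cycAdd m' (l + 1))) = g (cycAdd m (l + 2 + 1)) := by
    rcases (show m'.val + (l + 1) < k - 2 ∨ m'.val + (l + 1) = k - 2 by omega) with h' | h'
    · rw [apply_seqSkip_of_le g ha hg (by rw [cycAdd_val_of_lt h']; omega)]
      refine congrArg g (Fin.ext ?_)
      change (cycAdd m' (l + 1)).val + 2 = _
      rw [cycAdd_val_of_lt h', cycAdd_val_of_lt (by omega)]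
      omega
    · have h₀ : (cycAdd m' (l + 1)).val = 0 := by rw [cycAdd_val, h', Nat.mod_self]
      refine congrArg g (Fin.ext ?_)
      rw [seqSkip_val_of_le ha (by omega), h₀, cycAdd_val,
        show m.val + (l + 2 + 1) = k by omega, Nat.mod_self]
  have e₃ : g (seqSkip a.val (cycSucc m')) = g (cycSucc m) := by
    have hs' : (cycSucc m').val = m.val + 1 := by
      rw [cycSucc, cycAdd_val_of_lt (by omega), hm']
    have hs : (cycSucc m).val = m.val + 1 := cycAdd_val_of_lt (by omega)
    exact congrArg g (Fin.ext (by rw [seqSkip_val_of_le ha (by omega), hs', hs]))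
  have e₄ : g (seqSkip a.val ⟨m'.val + l, hml'⟩) = g ⟨m.val + (l + 2), hml⟩ :=
    (apply_seqSkip_of_le g ha hg (by dsimp only; omega)).trans
      (congrArg g (Fin.ext (by dsimp only; omega)))
  exact ⟨e₁.symm.trans (h.1.trans e₂), e₃.symm.trans (h.2.trans e₄)⟩

end Endpoints

theorem adopted_block_endpoints_general (k : ℕ)
    (π : PairPartition k) (hnc : π.NonCrossing)
    (G : Type) (g : Fin k → G) (hg : π.IsAdopted g)
    (m : Fin k) (l : ℕ) (hml : m.val + l < k)
    (hb : π.pair m = ⟨m.val + l, hml⟩) :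
    g m = g (cycAdd m (l + 1)) ∧ g (cycSucc m) = g ⟨m.val + l, hml⟩ := by
  induction l using Nat.strong_induction_on generalizing k with
  | _ l ih =>
  have hbv : (π.pair m).val = m.val + l := congrArg Fin.val hb
  obtain _ | _ | l := l
  · exact absurd hb (by simpa using π.pair_ne m)
  · exact ⟨hg.apply_eq_apply_cycAdd_two hbv, congrArg g (Fin.ext (cycAdd_val_of_lt hml))⟩
  · obtain ⟨a, hma, haM, ha⟩ := hnc.exists_adjacent_block_between m (by omega)
    have hm' : m.val < k - 2 := by omega
    have hml' : m.val + l < k - 2 := by omega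
    have hb' := π.eraseAdjacent_pair_val ha hma haM ⟨m.val, hm'⟩ rfl
    have ih' := ih l (by omega) (k - 2) (π.eraseAdjacent a ha) (hnc.eraseAdjacent a ha) _
      (hg.delPairFun_seqSkip (by omega) ha) ⟨m.val, hm'⟩ hml' (Fin.ext (by dsimp only; omega))
    exact EndpointsAgree.of_seqSkip g hma (by omega) hml (hg.apply_eq_apply_cycAdd_two ha) _ rfl
      hml' ih'

/-- If `(g_1,…,g_k)` is a `π`-adopted sequence for a non-crossing
pair-partition `π` of `{1,…,k}` and `{m, m+l} ∈ π` for some `l > 1`, then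
`g_m = g_{m+l+1}` and `g_{m+1} = g_{m+l}` (indices cyclic). -/
theorem adopted_block_endpoints (k : ℕ) (hk : k ≠ 0) (hke : Even k)
    (π : PairPartition k) (hnc : π.NonCrossing)
    (G : Type) [Countable G] (g : Fin k → G) (hg : π.IsAdopted g)
    (m : Fin k) (l : ℕ) (hl : 1 < l) (hml : m.val + l < k)
    (hb : π.pair m = ⟨m.val + l, hml⟩) :
    g m = g (cycAdd m (l + 1)) ∧ g (cycSucc m) = g ⟨m.val + l, hml⟩ :=
  adopted_block_endpoints_general k π hnc G g hg m l hml hb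
end

section
/- Let k ∈ ℕ and let π be a partition of {1,...,k} whose number of blocks r satisfies r ≠ k/2. Then lim_{N→∞} N^{−(1+k/2)} · Σ_{(i_1,...,i_k) ∈ P_N^{-1}(π)} ( ∏_{j=1}^k α(|i_j − i_{j+1}|/N) ) · E[ ∏_{j=1}^k X^{(N)}_{i_j i_{j+1}} ] = 0, where i_{k+1} := i_1. -/
open MeasureTheory Filter Asymptotics ProbabilityTheory
open scoped Classical

/-! If `π` has fewer than `k/2` blocks, a tuple in `P_N^{-1}(π)` is pinned down, up to at most `B`
choices per entry by (C2), by its first entry and by the endpoints of the first edge of each block;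
hence `#P_N^{-1}(π) ≤ N^{1+r} B^k`. The summands are uniformly bounded by the moment bounds, so the
normalized sum is `O(N^{r - k/2}) → 0`. If `π` has more than `k/2` blocks, one block is a singleton
`{l₀}`: the edge `l₀` is then equivalent to no other edge, so by independence its centred factor
splits off and every expectation in the sum vanishes. -/

theorem Finset.prod_le_sum_pow_card {ι R : Type*} [Fintype ι] [Nonempty ι] [CommSemiring R]
    [LinearOrder R] [IsStrictOrderedRing R] {a : ι → R} (ha : ∀ j, 0 ≤ a j) :
    ∏ j, a j ≤ ∑ j, a j ^ Fintype.card ι := by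
  obtain ⟨j₀, -, hj₀⟩ := Finset.exists_max_image Finset.univ a Finset.univ_nonempty
  calc ∏ j, a j ≤ ∏ _j : ι, a j₀ :=
        Finset.prod_le_prod (fun j _ => ha j) fun j _ => hj₀ j (Finset.mem_univ j)
    _ = a j₀ ^ Fintype.card ι := Finset.prod_const _
    _ ≤ ∑ j, a j ^ Fintype.card ι :=
        Finset.single_le_sum (fun j _ => pow_nonneg (ha j) _) (Finset.mem_univ j₀)

theorem abs_integral_prod_le_card_mul {Ω ι : Type*} [MeasurableSpace Ω] {μ : Measure Ω}
    [Fintype ι] [Nonempty ι] {Y : ι → Ω → ℝ} {R : ℝ}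
    (hint : ∀ j, Integrable (fun ω => |Y j ω| ^ Fintype.card ι) μ)
    (hmom : ∀ j, ∫ ω, |Y j ω| ^ Fintype.card ι ∂μ ≤ R) :
    |∫ ω, ∏ j, Y j ω ∂μ| ≤ Fintype.card ι * R :=
  calc |∫ ω, ∏ j, Y j ω ∂μ| ≤ ∫ ω, ∏ j, |Y j ω| ∂μ := by
        simpa [Finset.abs_prod] using
          norm_integral_le_integral_norm (μ := μ) fun ω => ∏ j, Y j ω
    _ ≤ ∫ ω, ∑ j, |Y j ω| ^ Fintype.card ι ∂μ :=
        integral_mono_of_nonneg (ae_of_all _ fun ω => by positivity)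
          (integrable_finsetSum _ fun j _ => hint j)
          (ae_of_all _ fun ω => Finset.prod_le_sum_pow_card fun j => abs_nonneg _)
    _ = ∑ j, ∫ ω, |Y j ω| ^ Fintype.card ι ∂μ := integral_finsetSum _ fun j _ => hint j
    _ ≤ ∑ _j : ι, R := Finset.sum_le_sum fun j _ => hmom j
    _ = Fintype.card ι * R := by simp

lemma abs_finsum_mem_le_ncard_mul {ι : Type*} {s : Set ι} (hs : s.Finite) {f : ι → ℝ} {K : ℝ}
    (hf : ∀ i ∈ s, |f i| ≤ K) : |∑ᶠ i ∈ s, f i| ≤ s.ncard * K := by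
  rw [finsum_mem_eq_finite_toFinset_sum _ hs, Set.ncard_eq_toFinset_card _ hs]
  calc |∑ i ∈ hs.toFinset, f i| ≤ ∑ i ∈ hs.toFinset, |f i| := Finset.abs_sum_le_sum_abs _ _
    _ ≤ hs.toFinset.card • K :=
        Finset.sum_le_card_nsmul _ _ _ fun i hi => hf i (hs.mem_toFinset.1 hi)
    _ = hs.toFinset.card * K := nsmul_eq_mul _ _

lemma abs_natCast_sub_div_mem_Icc {N : ℕ} (a b : Fin N) :
    |(a.val : ℝ) - b.val| / N ∈ Set.Icc (0 : ℝ) 1 := by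
  have hN : (0 : ℝ) < N := Nat.cast_pos.2 a.pos
  refine ⟨by positivity, (div_le_one hN).2 (abs_sub_le_iff.2 ⟨?_, ?_⟩)⟩ <;>
  · have : (a.val : ℝ) < N := by exact_mod_cast a.isLt
    have : (b.val : ℝ) < N := by exact_mod_cast b.isLt
    linarith [(Nat.cast_nonneg a.val : (0 : ℝ) ≤ _), (Nat.cast_nonneg b.val : (0 : ℝ) ≤ _)]

lemma abs_prod_comp_abs_sub_div_le_pow {k N : ℕ} {α : ℝ → ℝ} {C : ℝ}
    (hC : ∀ x ∈ Set.Icc (0 : ℝ) 1, |α x| ≤ C) (i : Fin k → Fin N) :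
    |∏ j : Fin k, α (|((i j).val : ℝ) - ((i (cycSucc j)).val : ℝ)| / N)| ≤ C ^ k := by
  rw [Finset.abs_prod]
  calc ∏ j, |α (|((i j).val : ℝ) - ((i (cycSucc j)).val : ℝ)| / N)| ≤ ∏ _j : Fin k, C :=
        Finset.prod_le_prod (fun _ _ => abs_nonneg _) fun j _ =>
          hC _ (abs_natCast_sub_div_mem_Icc _ _)
    _ = C ^ k := by simp

theorem tendsto_inv_rpow_mul_of_abs_le {k r : ℕ} (hrk : 2 * r < k) {f : ℕ → ℝ} {M : ℝ}
    (hf : ∀ᶠ N in atTop, |f N| ≤ M * (N : ℝ) ^ (1 + r)) :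
    Tendsto (fun N : ℕ => ((N : ℝ) ^ ((1 : ℝ) + (k : ℝ) / 2))⁻¹ * f N) atTop (nhds 0) := by
  have hexp : (0 : ℝ) < k / 2 - r := by
    have : (2 * r : ℝ) < k := by exact_mod_cast hrk
    linarith
  have hlim : Tendsto (fun N : ℕ => M * (N : ℝ) ^ (-((k : ℝ) / 2 - r))) atTop (nhds 0) := by
    simpa using ((tendsto_rpow_neg_atTop hexp).comp tendsto_natCast_atTop_atTop).const_mul M
  refine squeeze_zero_norm' ?_ hlim
  filter_upwards [hf, eventually_gt_atTop 0] with N hN hN0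
  have hNpos : (0 : ℝ) < N := Nat.cast_pos.2 hN0
  have hpow : ((N : ℝ) ^ ((1 : ℝ) + k / 2))⁻¹ * (N : ℝ) ^ (1 + r)
      = (N : ℝ) ^ (-((k : ℝ) / 2 - r)) := by
    rw [← Real.rpow_natCast, ← Real.rpow_neg hNpos.le, ← Real.rpow_add hNpos]
    push_cast
    ring_nf
  rw [Real.norm_eq_abs, abs_mul, abs_inv, abs_of_pos (Real.rpow_pos_of_pos hNpos _)]
  calc ((N : ℝ) ^ ((1 : ℝ) + k / 2))⁻¹ * |f N|
        ≤ ((N : ℝ) ^ ((1 : ℝ) + k / 2))⁻¹ * (M * N ^ (1 + r)) := by gcongr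
    _ = M * (N : ℝ) ^ (-((k : ℝ) / 2 - r)) := by rw [← hpow]; ring

section Extensions

variable {α : Type*} [DecidableEq α] {k : ℕ}

def agreeBelow (S : Finset (Fin k → α)) (t : ℕ) (i₀ : Fin k → α) : Finset (Fin k → α) :=
  S.filter fun i => ∀ j : Fin k, j.val < t → i j = i₀ j

variable {S : Finset (Fin k → α)} {c : ℕ → ℕ}

lemma card_agreeBelow_le_prod
    (hc : ∀ t (ht : t < k), ∀ i₀ ∈ S,
      ((agreeBelow S t i₀).image fun i => i ⟨t, ht⟩).card ≤ c t)
    (n t : ℕ) (htn : t + n = k) {i₀ : Fin k → α} (hi₀ : i₀ ∈ S) :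
    (agreeBelow S t i₀).card ≤ ∏ s ∈ Finset.Ico t k, c s := by
  induction n generalizing t i₀ with
  | zero =>
    rw [show t = k by omega, Finset.Ico_self, Finset.prod_empty, Finset.card_le_one]
    intro i hi i' hi'
    simp only [agreeBelow, Finset.mem_filter] at hi hi'
    exact funext fun j => (hi.2 j (by omega)).trans (hi'.2 j (by omega)).symm
  | succ n ih =>
    have htk : t < k := by omega
    have hfiber : ∀ v ∈ (agreeBelow S t i₀).image (fun i => i ⟨t, htk⟩),
        ((agreeBelow S t i₀).filter fun i => i ⟨t, htk⟩ = v).card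
          ≤ ∏ s ∈ Finset.Ico (t + 1) k, c s := by
      intro v hv
      obtain ⟨i₁, hi₁, rfl⟩ := Finset.mem_image.mp hv
      simp only [agreeBelow, Finset.mem_filter] at hi₁
      refine (Finset.card_le_card fun i hi => ?_).trans (ih (t + 1) (by omega) hi₁.1)
      simp only [agreeBelow, Finset.mem_filter] at hi ⊢
      refine ⟨hi.1.1, fun j hj => ?_⟩
      rcases Nat.lt_succ_iff_lt_or_eq.mp hj with hj | hj
      · exact (hi.1.2 j hj).trans (hi₁.2 j hj).symm
      · exact (congrArg i (Fin.ext hj)).trans (hi.2.trans (congrArg i₁ (Fin.ext hj)).symm)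
    calc (agreeBelow S t i₀).card
        ≤ (∏ s ∈ Finset.Ico (t + 1) k, c s) *
            ((agreeBelow S t i₀).image fun i => i ⟨t, htk⟩).card :=
          Finset.card_le_mul_card_image _ _ hfiber
      _ ≤ (∏ s ∈ Finset.Ico (t + 1) k, c s) * c t := Nat.mul_le_mul_left _ (hc t htk i₀ hi₀)
      _ = ∏ s ∈ Finset.Ico t k, c s := by rw [Finset.prod_eq_prod_Ico_succ_bot htk, mul_comm]

theorem card_le_prod_of_card_image_agreeBelow_le
    (hc : ∀ t (ht : t < k), ∀ i₀ ∈ S,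
      ((agreeBelow S t i₀).image fun i => i ⟨t, ht⟩).card ≤ c t) :
    S.card ≤ ∏ t ∈ Finset.range k, c t := by
  rcases S.eq_empty_or_nonempty with rfl | ⟨i₀, hi₀⟩
  · simp
  have hS : agreeBelow S 0 i₀ = S :=
    Finset.filter_true_of_mem fun i _ j hj => absurd hj j.val.not_lt_zero
  rw [← hS, Finset.range_eq_Ico]
  exact card_agreeBelow_le_prod hc k 0 (zero_add k) hi₀

end Extensions

theorem integral_prod_eq_zero_of_isolated {Ω : Type*} [MeasureSpace Ω] {N : ℕ}
    {E : Fin N × Fin N → Fin N × Fin N → Prop} (hE : Equivalence E)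
    {X : Fin N → Fin N → Ω → ℝ} (hXmeas : ∀ i j, Measurable (X i j))
    (hXcent : ∀ i j, ∫ ω, X i j ω = 0) (hind : IndepClasses E hE X)
    {ι : Type*} [Fintype ι] (e : ι → Fin N × Fin N) (l₀ : ι)
    (hl₀ : ∀ l, E (e l) (e l₀) → l = l₀) :
    ∫ ω, ∏ l, X (e l).1 (e l).2 ω = 0 := by
  let s := Setoid.mk E hE
  let F : (c : Quotient s) → ({p // Quotient.mk s p = c} → ℝ) → ℝ :=
    fun c y => ∏ l : {l // Quotient.mk s (e l) = c}, y ⟨e l, l.2⟩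
  have hfactor : ∀ ω, ∏ l, X (e l).1 (e l).2 ω = ∏ c, F c fun p => X p.1.1 p.1.2 ω :=
    fun ω => (Fintype.prod_fiberwise (fun l => Quotient.mk s (e l)) _).symm
  have hsub : Subsingleton {l // Quotient.mk s (e l) = Quotient.mk s (e l₀)} :=
    ⟨fun a b => Subtype.ext
      ((hl₀ _ (Quotient.exact a.2)).trans (hl₀ _ (Quotient.exact b.2)).symm)⟩
  have hF₀ : ∫ ω, F (Quotient.mk s (e l₀)) (fun p => X p.1.1 p.1.2 ω) = 0 := by
    have hsingle : ∀ ω,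
        F (Quotient.mk s (e l₀)) (fun p => X p.1.1 p.1.2 ω) = X (e l₀).1 (e l₀).2 ω :=
      fun ω => Fintype.prod_subsingleton _
        (⟨l₀, rfl⟩ : {l // Quotient.mk s (e l) = Quotient.mk s (e l₀)})
    simp_rw [hsingle]
    exact hXcent _ _
  simp_rw [hfactor]
  have hFmeas : ∀ c, Measurable (F c) := fun c =>
    Finset.measurable_prod _ fun l _ =>
      measurable_pi_apply (⟨e l.1, l.2⟩ : {p // Quotient.mk s p = c})
  exact (hind.integral_fun_prod_comp (f := F)
    (fun c => (measurable_pi_lambda _ fun p => hXmeas _ _).aemeasurable)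
    (fun c => (hFmeas c).aestronglyMeasurable)).trans
    (Finset.prod_eq_zero (Finset.mem_univ _) hF₀)

section Blocks

variable {k : ℕ} (π : Finpartition (Finset.univ : Finset (Fin k)))

def firstInBlock : Finset (Fin k) :=
  Finset.univ.filter fun l => ∀ m < l, π.part m ≠ π.part l

lemma card_firstInBlock_le : (firstInBlock π).card ≤ π.parts.card := by
  refine Finset.card_le_card_of_injOn π.part (fun l _ => π.part_mem.2 (Finset.mem_univ l)) ?_
  intro l hl l' hl' h
  simp only [firstInBlock, Finset.mem_coe, Finset.mem_filter, Finset.mem_univ, true_and]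
    at hl hl'
  by_contra hne
  rcases lt_or_gt_of_ne hne with hlt | hlt
  · exact hl' l hlt h
  · exact hl l' hlt h.symm

lemma exists_singleton_mem_parts_of_lt (h : k < 2 * π.parts.card) : ∃ l, {l} ∈ π.parts := by
  by_contra! hnone
  have htwo : ∀ b ∈ π.parts, 2 ≤ b.card := by
    intro b hb
    by_contra! hlt
    have hb1 : b.card = 1 := by have := (π.nonempty_of_mem_parts hb).card_pos; omega
    obtain ⟨l, rfl⟩ := Finset.card_eq_one.mp hb1
    exact hnone l hb
  have := Finset.card_nsmul_le_sum _ _ _ htwo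
  rw [π.sum_card_parts, Finset.card_univ, Fintype.card_fin, smul_eq_mul] at this
  omega

end Blocks

lemma cycSucc_val_of_lt {k : ℕ} {m : Fin k} (h : m.val + 1 < k) : (cycSucc m).val = m.val + 1 :=
  Nat.mod_eq_of_lt h

section PinvPartition

variable {k N : ℕ} {E : Fin N × Fin N → Fin N × Fin N → Prop}
  {π : Finpartition (Finset.univ : Finset (Fin k))}

lemma rel_iff_part_eq_of_mem_pinvPartition {i : Fin k → Fin N} (hi : i ∈ PinvPartition E π)
    (l m : Fin k) : E (i l, i (cycSucc l)) (i m, i (cycSucc m)) ↔ π.part l = π.part m := by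
  rw [hi l m, ← π.mem_part_iff_exists,
    π.mem_part_iff_part_eq_part (Finset.mem_univ _) (Finset.mem_univ _)]

lemma eq_of_rel_of_singleton_mem_parts {i : Fin k → Fin N} (hi : i ∈ PinvPartition E π)
    {l₀ : Fin k} (hl₀ : {l₀} ∈ π.parts) (l : Fin k)
    (hl : E (i l, i (cycSucc l)) (i l₀, i (cycSucc l₀))) : l = l₀ := by
  rw [rel_iff_part_eq_of_mem_pinvPartition hi,
    π.part_eq_of_mem hl₀ (Finset.mem_singleton_self l₀)] at hl
  simpa [hl] using π.mem_part_self.2 (Finset.mem_univ l)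

lemma card_image_eval_agreeBelow_le_of_part_eq {B : ℕ} (hC2 : cond2 E B) {t : ℕ} (ht : t < k)
    {l m : Fin k} (hlt : l.val + 1 = t) (hml : m < l) (hm : π.part m = π.part l)
    (i₀ : Fin k → Fin N) :
    ((agreeBelow (PinvPartition E π).toFinset t i₀).image fun i => i ⟨t, ht⟩).card ≤ B := by
  have hm_lt : m.val + 1 < t := by rw [← hlt]; exact Nat.succ_lt_succ hml
  have hsucc_m : (cycSucc m).val = m.val + 1 := cycSucc_val_of_lt (by omega)
  have hsucc_l : cycSucc l = ⟨t, ht⟩ := Fin.ext ((cycSucc_val_of_lt (by omega)).trans hlt)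
  refine (Finset.card_le_card (t := (Set.toFinite
    {s | E (i₀ m, i₀ (cycSucc m)) (i₀ l, s)}).toFinset) fun s hs => ?_).trans ?_
  · obtain ⟨i, hi, rfl⟩ := Finset.mem_image.mp hs
    rw [agreeBelow, Finset.mem_filter, Set.mem_toFinset] at hi
    have hrel := (rel_iff_part_eq_of_mem_pinvPartition hi.1 m l).2 hm
    rw [hi.2 m (by omega), hi.2 (cycSucc m) (by omega), hi.2 l (by omega), hsucc_l] at hrel
    simpa using hrel
  · rw [← Set.ncard_eq_toFinset_card]
    exact hC2 _ _ _

theorem ncard_pinvPartition_le {B : ℕ} (hN : 0 < N) (hB : 1 ≤ B) (hC2 : cond2 E B) :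
    (PinvPartition E π).ncard ≤ N ^ (1 + π.parts.card) * B ^ k := by
  -- The positions whose entry may be chosen freely: `0` and the endpoint of the first edge of
  -- each block; every other entry has at most `B` choices.
  set L : Finset ℕ := insert 0 ((firstInBlock π).image fun l : Fin k => l.val + 1)
  have hLcard : L.card ≤ 1 + π.parts.card := by
    have := (Finset.card_image_le (s := firstInBlock π) (f := fun l : Fin k => l.val + 1)).trans
      (card_firstInBlock_le π)
    exact (Finset.card_insert_le _ _).trans (by omega)
  rw [Set.ncard_eq_toFinset_card']
  refine (card_le_prod_of_card_image_agreeBelow_le (c := fun t => (if t ∈ L then N else 1) * B)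
    fun t ht i₀ _ => ?_).trans ?_
  · by_cases htL : t ∈ L
    · rw [if_pos htL]
      exact (Finset.card_le_univ _).trans (by simpa using Nat.le_mul_of_pos_right N hB)
    rw [if_neg htL, one_mul]
    have ht0 : t ≠ 0 := fun h => htL (h ▸ Finset.mem_insert_self _ _)
    obtain ⟨l, hlt⟩ : ∃ l : Fin k, l.val + 1 = t := ⟨⟨t - 1, by omega⟩, by simp only; omega⟩
    have hl : l ∉ firstInBlock π := fun h =>
      htL (Finset.mem_insert_of_mem (Finset.mem_image.2 ⟨l, h, hlt⟩))
    simp only [firstInBlock, Finset.mem_filter, Finset.mem_univ, true_and, not_forall, not_not]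
      at hl
    obtain ⟨m, hml, hm⟩ := hl
    exact card_image_eval_agreeBelow_le_of_part_eq hC2 ht hlt hml hm i₀
  · rw [Finset.prod_mul_distrib, Finset.prod_const, Finset.card_range, Finset.prod_ite_mem,
      Finset.prod_const]
    gcongr
    exact (Finset.card_le_card Finset.inter_subset_right).trans hLcard

end PinvPartition

theorem Pinv_sum_vanishes_of_blocks_ne_general (k : ℕ)
    (E : (N : ℕ) → (Fin N × Fin N → Fin N × Fin N → Prop))
    (hE : ∀ N, Equivalence (E N))
    (B : ℕ) (hB : 1 ≤ B) (hC2 : ∀ N, cond2 (E N) B)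
    (Ω : Type) [MeasureSpace Ω]
    (X : (N : ℕ) → Fin N → Fin N → Ω → ℝ)
    (hXmeas : ∀ N i j, Measurable (X N i j))
    (hXcent : ∀ N i j, ∫ ω, X N i j ω = 0)
    (hXint : ∀ (p : ℕ) N i j, Integrable fun ω => |X N i j ω| ^ p)
    (hXmom : ∀ p : ℕ, ∃ R : ℝ, ∀ N i j, (∫ ω, |X N i j ω| ^ p) ≤ R)
    (hXindep : ∀ N, IndepClasses (E N) (hE N) (X N))
    (α : ℝ → ℝ)
    (hαbdd : ∃ C : ℝ, ∀ x ∈ Set.Icc (0:ℝ) 1, |α x| ≤ C)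
    (π : Finpartition (Finset.univ : Finset (Fin k)))
    (hr : 2 * π.parts.card ≠ k) :
    Filter.Tendsto (fun N : ℕ =>
      ((N : ℝ) ^ ((1 : ℝ) + (k : ℝ) / 2))⁻¹ *
        ∑ᶠ i ∈ PinvPartition (E N) π,
          (∏ j : Fin k, α (|((i j).val : ℝ) - ((i (cycSucc j)).val : ℝ)| / N)) *
            ∫ ω, ∏ j : Fin k, X N (i j) (i (cycSucc j)) ω)
      Filter.atTop (nhds 0) := by
  rcases lt_or_gt_of_ne hr with hlt | hgt
  · obtain ⟨C, hC⟩ := hαbdd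
    obtain ⟨R, hR⟩ := hXmom k
    have hC0 : 0 ≤ C := (abs_nonneg _).trans (hC 0 ⟨le_rfl, zero_le_one⟩)
    have hR0 : 0 ≤ R := (integral_nonneg fun _ => by positivity).trans (hR 1 0 0)
    have : Nonempty (Fin k) := ⟨⟨0, by omega⟩⟩
    refine tendsto_inv_rpow_mul_of_abs_le hlt (M := B ^ k * (C ^ k * (k * R))) ?_
    filter_upwards [eventually_gt_atTop 0] with N hN
    calc _ ≤ (PinvPartition (E N) π).ncard * (C ^ k * (k * R)) :=
          abs_finsum_mem_le_ncard_mul (Set.toFinite _) fun i _ => by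
            rw [abs_mul]
            refine mul_le_mul (abs_prod_comp_abs_sub_div_le_pow hC i) ?_ (abs_nonneg _)
              (pow_nonneg hC0 k)
            simpa using abs_integral_prod_le_card_mul (μ := volume)
              (Y := fun j => X N (i j) (i (cycSucc j))) (R := R)
              (by simpa using fun j => hXint k N _ _) (by simpa using fun j => hR N _ _)
      _ ≤ ((N ^ (1 + π.parts.card) * B ^ k : ℕ) : ℝ) * (C ^ k * (k * R)) := by
          gcongr
          exact ncard_pinvPartition_le hN hB (hC2 N)
      _ = _ := by push_cast; ring
  · obtain ⟨l₀, hl₀⟩ := exists_singleton_mem_parts_of_lt π hgt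
    have hzero : ∀ N, ∀ i ∈ PinvPartition (E N) π, ∫ ω, ∏ j, X N (i j) (i (cycSucc j)) ω = 0 :=
      fun N i hi => integral_prod_eq_zero_of_isolated (hE N) (hXmeas N) (hXcent N) (hXindep N)
        (fun j => (i j, i (cycSucc j))) l₀ (eq_of_rel_of_singleton_mem_parts hi hl₀)
    refine tendsto_const_nhds.congr fun N => ?_
    rw [finsum_mem_eq_zero_of_forall_eq_zero fun i hi => by rw [hzero N i hi, mul_zero], mul_zero]

/-- For a partition `π` of `{1,…,k}` whose number of blocks `r`
satisfies `r ≠ k/2`, the normalized sum over `P_N^{-1}(π)` of the weighted expectations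
vanishes in the limit `N → ∞`. -/
theorem Pinv_sum_vanishes_of_blocks_ne (k : ℕ)
    (E : (N : ℕ) → (Fin N × Fin N → Fin N × Fin N → Prop))
    (hE : ∀ N, Equivalence (E N))
    (hEsymm : ∀ N (p q : Fin N), E N (p, q) (q, p))
    (hC1 : (fun N => (cond1Count (E N) : ℝ)) =o[Filter.atTop] fun N => (N : ℝ) ^ 2)
    (B : ℕ) (hB : 1 ≤ B) (hC2 : ∀ N, cond2 (E N) B)
    (hC3 : (fun N => (cond3Count (E N) : ℝ)) =o[Filter.atTop] fun N => (N : ℝ) ^ 2)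
    (Ω : Type) [MeasureSpace Ω] [IsProbabilityMeasure (volume : Measure Ω)]
    (X : (N : ℕ) → Fin N → Fin N → Ω → ℝ)
    (hXmeas : ∀ N i j, Measurable (X N i j))
    (hXsymm : ∀ N i j, X N i j = X N j i)
    (hXcent : ∀ N i j, ∫ ω, X N i j ω = 0)
    (hXvar : ∀ N i j, ∫ ω, (X N i j ω) ^ 2 = 1)
    (hXint : ∀ (p : ℕ) N i j, Integrable fun ω => |X N i j ω| ^ p)
    (hXmom : ∀ p : ℕ, ∃ R : ℝ, ∀ N i j, (∫ ω, |X N i j ω| ^ p) ≤ R)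
    (hXindep : ∀ N, IndepClasses (E N) (hE N) (X N))
    (α : ℝ → ℝ)
    (hαbdd : ∃ C : ℝ, ∀ x ∈ Set.Icc (0:ℝ) 1, |α x| ≤ C)
    (hαae : ∀ᵐ x ∂(volume.restrict (Set.Icc (0:ℝ) 1)), ContinuousAt α x)
    (π : Finpartition (Finset.univ : Finset (Fin k)))
    (hr : 2 * π.parts.card ≠ k) :
    Filter.Tendsto (fun N : ℕ =>
      ((N : ℝ) ^ ((1 : ℝ) + (k : ℝ) / 2))⁻¹ *
        ∑ᶠ i ∈ PinvPartition (E N) π,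
          (∏ j : Fin k, α (|((i j).val : ℝ) - ((i (cycSucc j)).val : ℝ)| / N)) *
            ∫ ω, ∏ j : Fin k, X N (i j) (i (cycSucc j)) ω)
      Filter.atTop (nhds 0) :=
  Pinv_sum_vanishes_of_blocks_ne_general k E hE B hB hC2 Ω X hXmeas hXcent hXint hXmom hXindep α
    hαbdd π hr
end
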